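/- Let 0 < α < mn, a = 2^{m(n+1)}, and for k ∈ ℤ let Q_j^k be the maximal dyadic cubes of Ω_k = {M_α^d(f⃗) > a^k}, satisfying a^k < ∏_i |Q_j^k|^{−(1−α/(mn))}∫_{Q_j^k}|f_i| ≤ 2^{mn}a^k. Then |Q_j^k ∩ Ω_{k+1}| ≤ 2ⁿ a^{−1/m} |Q_j^k| for all j,k. -/

import Mathlib

open MeasureTheory ENNReal NNReal Set

noncomputable section

/-- Euclidean space `ℝⁿ`. -/
abbrev En (n : ℕ) := EuclideanSpace ℝ (Fin n)

/-- The axis-parallel half-open cube with lower corner `a` and side length `h`. -/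
def Cube (n : ℕ) (a : Fin n → ℝ) (h : ℝ) : Set (En n) :=
  {x | ∀ i, a i ≤ x i ∧ x i < a i + h}

/-- Conjugate exponent `p' = p/(p-1)`. -/
def rconj (p : ℝ) : ℝ := p / (p - 1)

/-- Multilinear fractional maximal operator `M_α`. -/
def MFrac (m n : ℕ) (α : ℝ) (f : Fin m → En n → ℝ) (x : En n) : ℝ≥0∞ :=
  ⨆ (a : Fin n → ℝ) (h : ℝ) (_ : 0 < h) (_ : x ∈ Cube n a h),
    ∏ i, (volume (Cube n a h)) ^ (α / (m * n : ℝ) - 1) *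
      ∫⁻ y in Cube n a h, (‖f i y‖₊ : ℝ≥0∞)

/-- Cube of the translated dyadic grid `D_β`. -/
def GridCube (n : ℕ) (β : Fin n → ℝ) (k : ℤ) (j : Fin n → ℤ) : Set (En n) :=
  Cube n (fun i => (2:ℝ) ^ (-k) * ((j i : ℝ) + (-1 : ℝ) ^ k * β i)) ((2:ℝ) ^ (-k))

/-- Multilinear fractional maximal operator restricted to the grid `D_β`. -/
def MFracGrid (m n : ℕ) (α : ℝ) (β : Fin n → ℝ) (f : Fin m → En n → ℝ) (x : En n) : ℝ≥0∞ :=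
  ⨆ (k : ℤ) (j : Fin n → ℤ) (_ : x ∈ GridCube n β k j),
    ∏ i, (volume (GridCube n β k j)) ^ (α / (m * n : ℝ) - 1) *
      ∫⁻ y in GridCube n β k j, (‖f i y‖₊ : ℝ≥0∞)

/-- The multiple weight constant `[ω]_{A_{(P,q)}}` (all `p i > 1`). -/
def Apq (m n : ℕ) (p : Fin m → ℝ) (q : ℝ) (ω : Fin m → En n → ℝ≥0∞) : ℝ≥0∞ :=
  ⨆ (a : Fin n → ℝ) (h : ℝ) (_ : 0 < h),
    ((volume (Cube n a h))⁻¹ * ∫⁻ x in Cube n a h, (∏ i, ω i x) ^ q) *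
      ∏ i, ((volume (Cube n a h))⁻¹ *
        ∫⁻ x in Cube n a h, ω i x ^ (-(rconj (p i)))) ^ (q / rconj (p i))

/-- Hardy–Littlewood maximal operator (over cubes). -/
def HLMax (n : ℕ) (g : En n → ℝ≥0∞) (x : En n) : ℝ≥0∞ :=
  ⨆ (a : Fin n → ℝ) (h : ℝ) (_ : 0 < h) (_ : x ∈ Cube n a h),
    (volume (Cube n a h))⁻¹ * ∫⁻ y in Cube n a h, g y

/-- The Fujii–Wilson `A_∞` constant. -/
def AInfty (n : ℕ) (w : En n → ℝ≥0∞) : ℝ≥0∞ :=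
  ⨆ (a : Fin n → ℝ) (h : ℝ) (_ : 0 < h),
    (∫⁻ x in Cube n a h, w x)⁻¹ *
      ∫⁻ x in Cube n a h, HLMax n ((Cube n a h).indicator w) x

/-- Weighted `L^p` "norm" `(∫ F^p w)^{1/p}` for `ℝ≥0∞`-valued `F`. -/
def wnorm (n : ℕ) (p : ℝ) (w : En n → ℝ≥0∞) (F : En n → ℝ≥0∞) : ℝ≥0∞ :=
  (∫⁻ x, F x ^ p * w x) ^ (1 / p)

/-- Multilinear fractional maximal operator with rough homogeneous kernel `Ω`. -/
def MOmega (m n : ℕ) (α : ℝ) (Ω : (Fin m → En n) → ℝ) (f : Fin m → En n → ℝ)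
    (x : En n) : ℝ≥0∞ :=
  ⨆ (a : Fin n → ℝ) (h : ℝ) (_ : 0 < h) (_ : x ∈ Cube n a h),
    (volume (Cube n a h)) ^ (α / (n : ℝ) - m) *
      ∫⁻ y in univ.pi (fun _ : Fin m => Cube n a h),
        (‖Ω (fun i => x - y i)‖₊ : ℝ≥0∞) * ∏ i, (‖f i (y i)‖₊ : ℝ≥0∞)

/-- The `L^s((S^{n-1})^m)` norm of a (degree-zero homogeneous) kernel, realized through the
cone measure on the product of unit spheres. -/
def sphereNorm (m n : ℕ) (s : ℝ) (Ω : (Fin m → En n) → ℝ) : ℝ≥0∞ :=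
  eLpNorm Ω (ENNReal.ofReal s)
    (Measure.map (fun (y : Fin m → En n) (i : Fin m) => ‖y i‖⁻¹ • y i)
      (((n : ℝ≥0∞) ^ m) • volume.restrict (univ.pi fun _ : Fin m => Metric.ball (0 : En n) 1)))

/-- Euclidean norm of `(y₁, …, y_m) ∈ (ℝⁿ)^m`. -/
def bigNorm (m n : ℕ) (y : Fin m → En n) : ℝ := Real.sqrt (∑ i, ‖y i‖ ^ 2)

/-- Multilinear fractional integral with rough homogeneous kernel (absolute values). -/
def IOmega (m n : ℕ) (α : ℝ) (Ω : (Fin m → En n) → ℝ) (f : Fin m → En n → ℝ)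
    (x : En n) : ℝ≥0∞ :=
  ∫⁻ y : Fin m → En n,
    ENNReal.ofReal (bigNorm m n y ^ (α - (m * n : ℝ))) * (‖Ω y‖₊ : ℝ≥0∞) *
      ∏ i, (‖f i (x - y i)‖₊ : ℝ≥0∞)

/-- Standard dyadic cube `2^{-k}([0,1)^n + j)`. -/
def DyadicCube (n : ℕ) (k : ℤ) (j : Fin n → ℤ) : Set (En n) :=
  Cube n (fun i => (j i : ℝ) * (2:ℝ) ^ (-k)) ((2:ℝ) ^ (-k))

def IsDyadic (n : ℕ) (S : Set (En n)) : Prop := ∃ k j, S = DyadicCube n k j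

/-- The product of fractional averages `∏_i |S|^{α/(mn)-1} ∫_S |f_i|`. -/
def dyadAvg (m n : ℕ) (α : ℝ) (f : Fin m → En n → ℝ) (S : Set (En n)) : ℝ≥0∞ :=
  ∏ i, (volume S) ^ (α / (m * n : ℝ) - 1) * ∫⁻ y in S, (‖f i y‖₊ : ℝ≥0∞)

/-- Dyadic multilinear fractional maximal operator `M_α^d`. -/
def MFracDyadic (m n : ℕ) (α : ℝ) (f : Fin m → En n → ℝ) (x : En n) : ℝ≥0∞ :=
  ⨆ (k : ℤ) (j : Fin n → ℤ) (_ : x ∈ DyadicCube n k j), dyadAvg m n α f (DyadicCube n k j)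

/-- A maximal (Calderón–Zygmund) dyadic cube of the level set at height `t`. -/
def IsCZCube (m n : ℕ) (α : ℝ) (f : Fin m → En n → ℝ) (t : ℝ≥0∞) (S : Set (En n)) : Prop :=
  IsDyadic n S ∧ t < dyadAvg m n α f S ∧
    ∀ S', IsDyadic n S' → S ⊂ S' → ¬ t < dyadAvg m n α f S'

/-- The multiple weight constant `[ω]_{A_{P}}` of Lerner–Ombrosi–Pérez–Torres–Trujillo. -/
def ApVec (m n : ℕ) (p : Fin m → ℝ) (pp : ℝ) (ω : Fin m → En n → ℝ≥0∞) : ℝ≥0∞ :=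
  ⨆ (a : Fin n → ℝ) (h : ℝ) (_ : 0 < h),
    (∏ i, ((volume (Cube n a h))⁻¹ *
        ∫⁻ x in Cube n a h, ω i x ^ (1 - rconj (p i))) ^ (pp / rconj (p i))) *
      ((volume (Cube n a h))⁻¹ * ∫⁻ x in Cube n a h, ∏ i, ω i x ^ (pp / p i))

/-- `X`-average `‖g‖_{X,Q} = ‖τ_{ℓ(Q)}(g χ_Q)‖_X` of `g` over the cube `Q = Q(a,h)`,
for an abstract Banach-function-space norm functional `N`. -/
def Xavg (n : ℕ) (N : (En n → ℝ≥0∞) → ℝ≥0∞) (a : Fin n → ℝ) (h : ℝ)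
    (g : En n → ℝ≥0∞) : ℝ≥0∞ :=
  N (fun x => (Cube n a h).indicator g (h • x))

/-- Maximal operator `M_X` associated with the norm functional `N`. -/
def MX (n : ℕ) (N : (En n → ℝ≥0∞) → ℝ≥0∞) (g : En n → ℝ≥0∞) (x : En n) : ℝ≥0∞ :=
  ⨆ (a : Fin n → ℝ) (h : ℝ) (_ : 0 < h) (_ : x ∈ Cube n a h), Xavg n N a h g

/-- Weighted fractional maximal operator `M_{σ,α/m}`. -/
def MWFrac (n m : ℕ) (α : ℝ) (σ : En n → ℝ≥0∞) (f : En n → ℝ) (x : En n) : ℝ≥0∞ :=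
  ⨆ (a : Fin n → ℝ) (h : ℝ) (_ : 0 < h) (_ : x ∈ Cube n a h),
    (∫⁻ y in Cube n a h, σ y) ^ (α / (m * n : ℝ) - 1) *
      ∫⁻ y in Cube n a h, (‖f y‖₊ : ℝ≥0∞) * σ y

/-- The reverse Hölder exponent `r(w) = 1 + 1/(c_n [w]_{A_∞})`. -/
def rExp (n : ℕ) (A : ℝ) : ℝ := 1 + 1 / ((2:ℝ) ^ (11 + n) * A)

end

/-! Every dyadic cube through a point of `S` whose average exceeds `a^(k+1) ≥ a^k` lies inside `S`
by maximality of `S`, so `S ∩ Ω_{k+1}` is covered by the pairwise disjoint maximal dyadic cubes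
`Q ⊆ S` of level `a^(k+1)`. For each of them `a^((k+1)/m) |Q| ≤ ∏ᵢ (|S|^(α/mn) ∫_Q |fᵢ|)^(1/m)`;
summing over `Q` with Hölder's inequality for `m` factors and using disjointness gives
`a^((k+1)/m) ∑ |Q| ≤ |S| (dyadAvg S)^(1/m) ≤ |S| (2^(mn) a^k)^(1/m)`. -/

section Dyadic

variable {n : ℕ}

lemma cube_eq_preimage (a : Fin n → ℝ) (h : ℝ) :
    Cube n a h =
      (MeasurableEquiv.toLp 2 (Fin n → ℝ)).symm ⁻¹' univ.pi fun i => Ico (a i) (a i + h) := by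
  ext x
  simp [Cube, MeasurableEquiv.coe_toLp_symm]

lemma measurableSet_cube (a : Fin n → ℝ) (h : ℝ) : MeasurableSet (Cube n a h) := by
  rw [cube_eq_preimage]
  exact MeasurableEquiv.measurable _ (.univ_pi fun _ => measurableSet_Ico)

lemma volume_cube (a : Fin n → ℝ) (h : ℝ) : volume (Cube n a h) = ENNReal.ofReal h ^ n := by
  rw [cube_eq_preimage,
    (EuclideanSpace.volume_preserving_symm_measurableEquiv_toLp (Fin n)).measure_preimage
      (MeasurableSet.univ_pi fun _ => measurableSet_Ico).nullMeasurableSet, volume_pi_pi]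
  simp [Real.volume_Ico]

noncomputable def dyadicIndex (k : ℤ) (x : En n) : Fin n → ℤ := fun i => ⌊(2 : ℝ) ^ k * x i⌋

lemma mem_dyadicCube_iff {k : ℤ} {j : Fin n → ℤ} {x : En n} :
    x ∈ DyadicCube n k j ↔ dyadicIndex k x = j := by
  have h2k : (0 : ℝ) < 2 ^ k := by positivity
  simp only [DyadicCube, Cube, mem_ofPred_eq, funext_iff, dyadicIndex, Int.floor_eq_iff]
  refine forall_congr' fun i => and_congr ?_ ?_
  · rw [zpow_neg, ← div_eq_mul_inv, div_le_iff₀ h2k, mul_comm]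
  · rw [← add_one_mul, zpow_neg, ← div_eq_mul_inv, lt_div_iff₀ h2k, mul_comm]

lemma dyadicIndex_eq_of_le {k k' : ℤ} (hk : k' ≤ k) {x y : En n}
    (h : dyadicIndex k x = dyadicIndex k y) : dyadicIndex k' x = dyadicIndex k' y := by
  obtain ⟨d, rfl⟩ := Int.exists_add_of_le hk
  have coarsen : ∀ z : En n,
      dyadicIndex k' z = fun i => dyadicIndex (k' + d) z i / ((2 ^ d : ℕ) : ℤ) := by
    intro z
    funext i
    rw [dyadicIndex, dyadicIndex, ← Int.floor_div_natCast]
    congr 1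
    rw [zpow_add₀ two_ne_zero, zpow_natCast]
    push_cast
    field_simp
  rw [coarsen, coarsen, h]

lemma dyadicCube_subset_of_le {k k' : ℤ} (hk : k' ≤ k) {j j' : Fin n → ℤ} {x : En n}
    (hx : x ∈ DyadicCube n k j) (hx' : x ∈ DyadicCube n k' j') :
    DyadicCube n k j ⊆ DyadicCube n k' j' := by
  intro y hy
  rw [mem_dyadicCube_iff] at *
  rw [← hx', dyadicIndex_eq_of_le hk (hy.trans hx.symm)]

lemma dyadicCube_nonempty (k : ℤ) (j : Fin n → ℤ) : (DyadicCube n k j).Nonempty :=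
  ⟨WithLp.toLp 2 fun i => (j i : ℝ) * 2 ^ (-k), fun i => by
    simpa using (zpow_pos two_pos (-k) : (0:ℝ) < _)⟩

lemma lt_of_dyadicCube_ssubset {k k' : ℤ} {j j' : Fin n → ℤ}
    (h : DyadicCube n k j ⊂ DyadicCube n k' j') : k' < k := by
  by_contra! hle
  obtain ⟨x, hx⟩ := dyadicCube_nonempty k j
  exact h.not_subset (dyadicCube_subset_of_le hle (h.subset hx) hx)

lemma volume_dyadicCube (k : ℤ) (j : Fin n → ℤ) :
    volume (DyadicCube n k j) = ENNReal.ofReal (2 ^ (-k)) ^ n :=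
  volume_cube _ _

lemma le_of_dyadicCube_subset (hn : 0 < n) {k k' : ℤ} {j j' : Fin n → ℤ}
    (h : DyadicCube n k j ⊆ DyadicCube n k' j') : k' ≤ k := by
  have hvol := measure_mono (μ := volume) h
  rw [volume_dyadicCube, volume_dyadicCube, ENNReal.pow_le_pow_left_iff hn.ne',
    ENNReal.ofReal_le_ofReal_iff (by positivity), zpow_le_zpow_iff_right₀ (by norm_num)] at hvol
  omega

lemma countable_setOf_isDyadic : {S | IsDyadic n S}.Countable := by
  convert countable_range fun p : ℤ × (Fin n → ℤ) => DyadicCube n p.1 p.2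
  ext S
  simp [IsDyadic, eq_comm]

namespace IsDyadic

variable {S Q : Set (En n)}

lemma measurableSet (hS : IsDyadic n S) : MeasurableSet S := by
  obtain ⟨k, j, rfl⟩ := hS
  exact measurableSet_cube _ _

lemma volume_ne_zero (hS : IsDyadic n S) : volume S ≠ 0 := by
  obtain ⟨k, j, rfl⟩ := hS
  rw [volume_dyadicCube]
  positivity

lemma volume_ne_top (hS : IsDyadic n S) : volume S ≠ ∞ := by
  obtain ⟨k, j, rfl⟩ := hS
  rw [volume_dyadicCube]
  exact pow_ne_top ofReal_ne_top

lemma subset_or_subset (hS : IsDyadic n S) (hQ : IsDyadic n Q) {x : En n} (hxS : x ∈ S)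
    (hxQ : x ∈ Q) : S ⊆ Q ∨ Q ⊆ S := by
  obtain ⟨k, j, rfl⟩ := hS
  obtain ⟨k', j', rfl⟩ := hQ
  rcases le_total k' k with h | h
  · exact .inl (dyadicCube_subset_of_le h hxS hxQ)
  · exact .inr (dyadicCube_subset_of_le h hxQ hxS)

end IsDyadic

end Dyadic

theorem ENNReal.tsum_prod_rpow_le {ι κ : Type*} (s : Finset ι) (g : ι → κ → ℝ≥0∞) {p : ι → ℝ}
    (hp : ∑ i ∈ s, p i = 1) (hp₀ : ∀ i ∈ s, 0 ≤ p i) :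
    ∑' x, ∏ i ∈ s, g i x ^ p i ≤ ∏ i ∈ s, (∑' x, g i x) ^ p i := by
  let _ : MeasurableSpace κ := ⊤
  have : MeasurableSingletonClass κ := ⟨fun _ => trivial⟩
  simpa only [lintegral_count] using
    lintegral_prod_norm_pow_le (μ := (Measure.count : Measure κ)) s
      (fun _ _ => measurable_from_top.aemeasurable) hp hp₀

section CalderonZygmund

variable {m n : ℕ} {α : ℝ} {f : Fin m → En n → ℝ} {t t' : ℝ≥0∞} {S Q : Set (En n)}

lemma IsCZCube.subset_of_mem (hS : IsCZCube m n α f t S) (hQ : IsDyadic n Q)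
    (hQt : t < dyadAvg m n α f Q) {x : En n} (hxS : x ∈ S) (hxQ : x ∈ Q) : Q ⊆ S := by
  rcases hQ.subset_or_subset hS.1 hxQ hxS with hQS | hSQ
  · exact hQS
  · rcases hSQ.eq_or_ssubset with rfl | hSQ
    · exact subset_rfl
    · exact absurd hQt (hS.2.2 Q hQ hSQ)

lemma pairwiseDisjoint_setOf_isCZCube : {Q | IsCZCube m n α f t Q}.PairwiseDisjoint id :=
  fun _ hQ _ hQ' hne => disjoint_left.2 fun _ hx hx' =>
    hne ((hQ'.subset_of_mem hQ.1 hQ.2.1 hx' hx).antisymm (hQ.subset_of_mem hQ'.1 hQ'.2.1 hx hx'))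

lemma exists_isCZCube_mem {x : En n} (hx : t < MFracDyadic m n α f x) (K : ℤ)
    (hK : ∀ k j, x ∈ DyadicCube n k j → t < dyadAvg m n α f (DyadicCube n k j) → K ≤ k) :
    ∃ Q, IsCZCube m n α f t Q ∧ x ∈ Q := by
  obtain ⟨k, j, hxk, hk⟩ :
      ∃ k j, x ∈ DyadicCube n k j ∧ t < dyadAvg m n α f (DyadicCube n k j) := by
    simpa only [MFracDyadic, lt_iSup_iff, exists_prop] using hx
  have hx_mem : ∀ k, x ∈ DyadicCube n k (dyadicIndex k x) := fun k => mem_dyadicCube_iff.2 rfl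
  obtain ⟨k₀, hk₀, hleast⟩ := Int.exists_least_of_bdd
    (P := fun k => t < dyadAvg m n α f (DyadicCube n k (dyadicIndex k x)))
    ⟨K, fun k hk => hK k _ (hx_mem k) hk⟩ ⟨k, mem_dyadicCube_iff.1 hxk ▸ hk⟩
  refine ⟨_, ⟨⟨k₀, _, rfl⟩, hk₀, ?_⟩, hx_mem k₀⟩
  rintro _ ⟨k', j', rfl⟩ hsub hk'
  obtain rfl := mem_dyadicCube_iff.1 (hsub.subset (hx_mem k₀))
  exact (lt_of_dyadicCube_ssubset hsub).not_ge (hleast k' hk')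

lemma IsCZCube.inter_setOf_lt_subset (hn : 0 < n) (hS : IsCZCube m n α f t S) (htt' : t ≤ t') :
    S ∩ {x | t' < MFracDyadic m n α f x} ⊆ ⋃ Q ∈ {Q | IsCZCube m n α f t' Q ∧ Q ⊆ S}, Q := by
  rintro x ⟨hxS, hx⟩
  have hsub : ∀ {Q}, IsDyadic n Q → t' < dyadAvg m n α f Q → x ∈ Q → Q ⊆ S :=
    fun hQ hQt hxQ => hS.subset_of_mem hQ (htt'.trans_lt hQt) hxS hxQ
  obtain ⟨k₀, j₀, rfl⟩ := hS.1
  obtain ⟨Q, hQ, hxQ⟩ := exists_isCZCube_mem hx k₀ fun k j hxk hk =>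
    le_of_dyadicCube_subset hn (hsub ⟨k, j, rfl⟩ hk hxk)
  exact mem_biUnion ⟨hQ, hsub hQ.1 hQ.2.1 hxQ⟩ hxQ

lemma pow_volume_mul_dyadAvg (hQ₀ : volume Q ≠ 0) (hQ : volume Q ≠ ∞) :
    volume Q ^ m * dyadAvg m n α f Q =
      ∏ i, volume Q ^ (α / (m * n : ℝ)) * ∫⁻ y in Q, ‖f i y‖₊ := by
  rw [dyadAvg, ← Fin.prod_const, ← Finset.prod_mul_distrib]
  refine Finset.prod_congr rfl fun i _ => ?_
  nth_rw 1 [← mul_assoc, ← ENNReal.rpow_one (volume Q)]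
  rw [← ENNReal.rpow_add _ _ hQ₀ hQ, add_sub_cancel]

lemma rpow_mul_tsum_volume_le (hm : m ≠ 0) (hα : 0 ≤ α) (hS : IsDyadic n S)
    {𝒬 : Set (Set (En n))} (h𝒬 : ∀ Q ∈ 𝒬, IsDyadic n Q ∧ Q ⊆ S ∧ t < dyadAvg m n α f Q)
    (hdisj : 𝒬.PairwiseDisjoint id) :
    t ^ (m : ℝ)⁻¹ * ∑' Q : 𝒬, volume (Q : Set (En n)) ≤
      volume S * dyadAvg m n α f S ^ (m : ℝ)⁻¹ := by
  have hcount : 𝒬.Countable := countable_setOf_isDyadic.mono fun Q hQ => (h𝒬 Q hQ).1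
  have hm₀ : (0 : ℝ) ≤ (m : ℝ)⁻¹ := by positivity
  set c := α / (m * n : ℝ)
  set G : Fin m → 𝒬 → ℝ≥0∞ := fun i Q => volume S ^ c * ∫⁻ y in Q, ‖f i y‖₊
  have hcube : ∀ Q : 𝒬, t ^ (m : ℝ)⁻¹ * volume (Q : Set (En n)) ≤ ∏ i, G i Q ^ (m : ℝ)⁻¹ := by
    rintro ⟨Q, hQ⟩
    obtain ⟨hQd, hQS, hQt⟩ := h𝒬 Q hQ
    have : volume Q ^ m * t ≤ ∏ i, G i ⟨Q, hQ⟩ := calc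
      volume Q ^ m * t ≤ volume Q ^ m * dyadAvg m n α f Q := by gcongr
      _ = ∏ i, volume Q ^ c * ∫⁻ y in Q, ‖f i y‖₊ :=
        pow_volume_mul_dyadAvg hQd.volume_ne_zero hQd.volume_ne_top
      _ ≤ ∏ i, volume S ^ c * ∫⁻ y in Q, ‖f i y‖₊ := by gcongr
    calc t ^ (m : ℝ)⁻¹ * volume Q = (volume Q ^ m * t) ^ (m : ℝ)⁻¹ := by
          rw [ENNReal.mul_rpow_of_nonneg _ _ hm₀, ENNReal.pow_rpow_inv_natCast hm, mul_comm]
      _ ≤ (∏ i, G i ⟨Q, hQ⟩) ^ (m : ℝ)⁻¹ := by gcongr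
      _ = ∏ i, G i ⟨Q, hQ⟩ ^ (m : ℝ)⁻¹ := (ENNReal.prod_rpow_of_nonneg hm₀).symm
  have hG : ∀ i, ∑' Q : 𝒬, G i Q ≤ volume S ^ c * ∫⁻ y in S, ‖f i y‖₊ := by
    intro i
    rw [ENNReal.tsum_mul_left, ← lintegral_biUnion (s := fun Q => Q) hcount
      (fun Q hQ => (h𝒬 Q hQ).1.measurableSet) hdisj]
    gcongr
    exact iUnion₂_subset fun Q hQ => (h𝒬 Q hQ).2.1
  calc t ^ (m : ℝ)⁻¹ * ∑' Q : 𝒬, volume (Q : Set (En n))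
      = ∑' Q : 𝒬, t ^ (m : ℝ)⁻¹ * volume (Q : Set (En n)) := ENNReal.tsum_mul_left.symm
    _ ≤ ∑' Q, ∏ i, G i Q ^ (m : ℝ)⁻¹ := ENNReal.tsum_le_tsum hcube
    _ ≤ ∏ i, (∑' Q, G i Q) ^ (m : ℝ)⁻¹ :=
      ENNReal.tsum_prod_rpow_le _ _ (by simp [hm]) fun _ _ => hm₀
    _ ≤ ∏ i, (volume S ^ c * ∫⁻ y in S, ‖f i y‖₊) ^ (m : ℝ)⁻¹ := by gcongr with i; exact hG i
    _ = (volume S ^ m * dyadAvg m n α f S) ^ (m : ℝ)⁻¹ := by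
      rw [ENNReal.prod_rpow_of_nonneg hm₀,
        pow_volume_mul_dyadAvg hS.volume_ne_zero hS.volume_ne_top]
    _ = volume S * dyadAvg m n α f S ^ (m : ℝ)⁻¹ := by
      rw [ENNReal.mul_rpow_of_nonneg _ _ hm₀, ENNReal.pow_rpow_inv_natCast hm]

end CalderonZygmund

/-- With `a = 2^(m(n+1))` all factors are powers of `2`, with exponents `(n+1)(k+1)`,
`n + (n+1)k` and `n - (n+1)`. -/
lemma le_two_pow_mul_of_rpow_inv_mul_le {m : ℕ} (n : ℕ) (hm : m ≠ 0) (k : ℤ) {x y : ℝ≥0∞}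
    (h : (((2 : ℝ≥0∞) ^ (m * (n + 1))) ^ (k + 1)) ^ (m : ℝ)⁻¹ * x ≤
      y * ((2 : ℝ≥0∞) ^ (m * n) * ((2 : ℝ≥0∞) ^ (m * (n + 1))) ^ k) ^ (m : ℝ)⁻¹) :
    x ≤ 2 ^ n * ((2 : ℝ≥0∞) ^ (m * (n + 1))) ^ (-(1 / (m : ℝ))) * y := by
  have hm' : (m : ℝ) ≠ 0 := Nat.cast_ne_zero.2 hm
  simp only [← ENNReal.rpow_natCast, ← ENNReal.rpow_intCast, ← ENNReal.rpow_mul,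
    ← ENNReal.rpow_add _ _ two_ne_zero ofNat_ne_top] at h ⊢
  rw [ENNReal.mul_le_iff_le_inv (by positivity) (ENNReal.rpow_ne_top_of_ne_zero two_ne_zero
    ofNat_ne_top)] at h
  refine h.trans_eq ?_
  rw [← ENNReal.rpow_neg, mul_comm y, ← mul_assoc, ← ENNReal.rpow_add _ _ two_ne_zero ofNat_ne_top]
  congr 2
  push_cast
  field_simp
  ring

theorem statement_16_general (m n : ℕ) (hm : 0 < m) (hn : 0 < n) (α : ℝ) (hα : 0 < α)
    (f : Fin m → En n → ℝ)
    (k : ℤ) (S : Set (En n))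
    (hS : IsCZCube m n α f (((2:ℝ≥0∞) ^ (m * (n+1))) ^ k) S)
    (hupper : dyadAvg m n α f S ≤
      (2:ℝ≥0∞) ^ (m * n) * ((2:ℝ≥0∞) ^ (m * (n+1))) ^ k) :
    volume (S ∩ {x | ((2:ℝ≥0∞) ^ (m * (n+1))) ^ (k+1) < MFracDyadic m n α f x}) ≤
      (2:ℝ≥0∞) ^ n * ((2:ℝ≥0∞) ^ (m * (n+1))) ^ (-(1/(m:ℝ))) * volume S := by
  set a : ℝ≥0∞ := 2 ^ (m * (n + 1))
  set 𝒬 := {Q | IsCZCube m n α f (a ^ (k + 1)) Q ∧ Q ⊆ S}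
  have hcover : S ∩ {x | a ^ (k + 1) < MFracDyadic m n α f x} ⊆ ⋃ Q ∈ 𝒬, Q :=
    hS.inter_setOf_lt_subset hn (ENNReal.zpow_le_of_le (one_le_pow₀ one_le_two) (by omega))
  have hHolder := rpow_mul_tsum_volume_le hm.ne' hα.le hS.1 (𝒬 := 𝒬)
    (fun Q hQ => ⟨hQ.1.1, hQ.2, hQ.1.2.1⟩) (pairwiseDisjoint_setOf_isCZCube.subset fun Q hQ => hQ.1)
  calc volume (S ∩ {x | a ^ (k + 1) < MFracDyadic m n α f x})
      ≤ ∑' Q : 𝒬, volume (Q : Set (En n)) := (measure_mono hcover).trans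
        (measure_biUnion_le _ (countable_setOf_isDyadic.mono fun Q hQ => hQ.1.1) _)
    _ ≤ 2 ^ n * a ^ (-(1 / (m : ℝ))) * volume S :=
        le_two_pow_mul_of_rpow_inv_mul_le n hm.ne' k (hHolder.trans (by gcongr))

/-- for the maximal dyadic cubes of `Ω_k = {M_α^d(f⃗) > a^k}` with
`a = 2^{m(n+1)}`, one has `|Q_j^k ∩ Ω_{k+1}| ≤ 2^n a^{-1/m} |Q_j^k|`. -/
theorem statement_16 (m n : ℕ) (hm : 0 < m) (hn : 0 < n) (α : ℝ) (hα : 0 < α)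
    (hα' : α < m * n) (f : Fin m → En n → ℝ)
    (hf : ∀ i, MeasureTheory.LocallyIntegrable (f i) volume)
    (k : ℤ) (S : Set (En n))
    (hS : IsCZCube m n α f (((2:ℝ≥0∞) ^ (m * (n+1))) ^ k) S)
    (hupper : dyadAvg m n α f S ≤
      (2:ℝ≥0∞) ^ (m * n) * ((2:ℝ≥0∞) ^ (m * (n+1))) ^ k) :
    volume (S ∩ {x | ((2:ℝ≥0∞) ^ (m * (n+1))) ^ (k+1) < MFracDyadic m n α f x}) ≤
      (2:ℝ≥0∞) ^ n * ((2:ℝ≥0∞) ^ (m * (n+1))) ^ (-(1/(m:ℝ))) * volume S :=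
  statement_16_general m n hm hn α hα f k S hS hupper
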